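/- For every integer k ≥ 3, the complete graph K_k is not σ-stable. -/

import Mathlib

open SimpleGraph

/-- `List.Sorted` as in the older Mathlib (removed since): `Sorted R l := Pairwise R l`. -/
def List.Sorted {α : Type*} (R : α → α → Prop) : List α → Prop :=
  List.Pairwise R

/-- The degree of a vertex, defined without decidability assumptions. -/
noncomputable def gdeg {V : Type*} [Fintype V] (G : SimpleGraph V) (v : V) : ℕ :=
  {w | G.Adj v w}.ncard

/-- The multiset of vertex degrees of a finite simple graph. -/
noncomputable def degMultiset {V : Type*} [Fintype V] (G : SimpleGraph V) : Multiset ℕ :=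
  Finset.univ.val.map (gdeg G)

/-- A finite sequence of naturals is *graphic* if it is the degree sequence of
a finite simple graph (a *realization*). -/
def IsGraphic (π : List ℕ) : Prop :=
  ∃ G : SimpleGraph (Fin π.length), degMultiset G = (π : Multiset ℕ)

/-- `H` is contained in `G` as a (not necessarily induced) subgraph. -/
def ContainsSub {V : Type*} {W : Type*} (H : SimpleGraph V) (G : SimpleGraph W) : Prop :=
  ∃ f : V → W, Function.Injective f ∧ ∀ ⦃a b⦄, H.Adj a b → G.Adj (f a) (f b)

/-- `π` is *potentially `H`-graphic*: some realization of `π` contains `H` as a subgraph. -/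
def PotentiallyGraphic {V : Type*} (H : SimpleGraph V) (π : List ℕ) : Prop :=
  ∃ G : SimpleGraph (Fin π.length), degMultiset G = (π : Multiset ℕ) ∧ ContainsSub H G

/-- The potential number `σ(H,n)`: the minimum even integer such that every
(nonincreasing) graphic sequence of length `n` with sum at least that integer is
potentially `H`-graphic. -/
noncomputable def potentialNumber {V : Type*} (H : SimpleGraph V) (n : ℕ) : ℕ :=
  sInf {s : ℕ | Even s ∧ ∀ π : List ℕ, π.length = n → π.Sorted (· ≥ ·) →
      IsGraphic π → s ≤ π.sum → PotentiallyGraphic H π}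

/-- The maximum degree `Δ(G)` of a finite graph. -/
noncomputable def maxDeg {V : Type*} [Fintype V] (G : SimpleGraph V) : ℕ :=
  Finset.univ.sup (gdeg G)

/-- The independence number `α(G)`. -/
noncomputable def indepNum {V : Type*} [Fintype V] (G : SimpleGraph V) : ℕ :=
  sSup {k | ∃ s : Finset V, s.card = k ∧ (s : Set V).Pairwise fun a b => ¬ G.Adj a b}

/-- `∇_i(H)`: the minimum of `Δ(F)` over induced subgraphs `F` of `H` of order `i`. -/
noncomputable def nabla {V : Type*} [Fintype V] (H : SimpleGraph V) (i : ℕ) : ℕ :=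
  sInf {d | ∃ s : Finset V, s.card = i ∧ maxDeg (SimpleGraph.induce (s : Set V) H) = d}

/-- The sequence `π̃_i(H,n) = ((n-1)^{k-i}, (k-i+∇_i(H)-1)^{n-k+i})`, with the last
term reduced by one if the sum would otherwise be odd. -/
noncomputable def tildePi {V : Type*} [Fintype V] (H : SimpleGraph V) (i n : ℕ) : List ℕ :=
  let k := Fintype.card V
  let d := k - i + nabla H i - 1
  let base := List.replicate (k - i) (n - 1) ++ List.replicate (n - k + i) d
  if Even base.sum then base else base.dropLast ++ [d - 1]

/-- `σ̃_i(H) = 2(k-i) + ∇_i(H) - 1`. -/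
noncomputable def sigmaTildeI {V : Type*} [Fintype V] (H : SimpleGraph V) (i : ℕ) : ℕ :=
  2 * (Fintype.card V - i) + nabla H i - 1

/-- `σ̃(H) = max_{α(H)+1 ≤ i ≤ k} σ̃_i(H)`. -/
noncomputable def sigmaTilde {V : Type*} [Fintype V] (H : SimpleGraph V) : ℕ :=
  (Finset.Icc (_root_.indepNum H + 1) (Fintype.card V)).sup (sigmaTildeI H)

/-- The family `P(H,n)` of extremal nonrealizing sequences. -/
noncomputable def potSet {V : Type*} [Fintype V] (H : SimpleGraph V) (n : ℕ) : Set (List ℕ) :=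
  {π | ∃ i ∈ Finset.Icc (_root_.indepNum H + 1) (Fintype.card V),
      sigmaTildeI H i = sigmaTilde H ∧ π = tildePi H i n}

/-- `i*(H)`: the least index `i ∈ {α(H)+1, …, k}` with `σ̃_i(H) = σ̃(H)`. -/
noncomputable def iStar {V : Type*} [Fintype V] (H : SimpleGraph V) : ℕ :=
  sInf {i | i ∈ Finset.Icc (_root_.indepNum H + 1) (Fintype.card V) ∧ sigmaTildeI H i = sigmaTilde H}

/-- `‖π₁ - π₂‖ = Σ_j |x_j - y_j|`, padding the shorter sequence with zeros. -/
def seqDist (π₁ π₂ : List ℕ) : ℕ :=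
  ((List.range (max π₁.length π₂.length)).map fun j =>
    Nat.dist (π₁.getD j 0) (π₂.getD j 0)).sum

/-- `H` is stable with respect to the potential number (σ-stable). -/
def SigmaStable {V : Type*} [Fintype V] (H : SimpleGraph V) : Prop :=
  ∀ ε : ℝ, 0 < ε → ∃ δ : ℝ, 0 < δ ∧ ∃ n₀ : ℕ, ∀ n : ℕ, n₀ ≤ n →
    ∀ π : List ℕ, π.length = n → π.Sorted (· ≥ ·) → IsGraphic π →
      ¬ PotentiallyGraphic H π →
      (potentialNumber H n : ℝ) - δ * n ≤ (π.sum : ℝ) →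
      ∃ π' ∈ potSet H n, (seqDist π π' : ℝ) < ε * n

/-- The nonincreasing degree sequence of a finite graph. -/
noncomputable def degList {V : Type*} [Fintype V] (G : SimpleGraph V) : List ℕ :=
  ((degMultiset G).sort (· ≤ ·)).reverse

/-- `π` is degree-sufficient for `H`: termwise, `π` dominates the nonincreasing
degree sequence of `H`. -/
def DegreeSufficient {V : Type*} [Fintype V] (H : SimpleGraph V) (π : List ℕ) : Prop :=
  Fintype.card V ≤ π.length ∧ ∀ i < Fintype.card V, (degList H).getD i 0 ≤ π.getD i 0

/-- `H` is weakly σ-stable. -/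
def WeaklySigmaStable {V : Type*} [Fintype V] (H : SimpleGraph V) : Prop :=
  ∀ ε : ℝ, 0 < ε → ∃ δ : ℝ, 0 < δ ∧ ∃ n₀ : ℕ, ∀ n : ℕ, n₀ ≤ n →
    ∀ π : List ℕ, π.length = n → π.Sorted (· ≥ ·) → IsGraphic π →
      DegreeSufficient H π →
      ¬ PotentiallyGraphic H π →
      (potentialNumber H n : ℝ) - δ * n ≤ (π.sum : ℝ) →
      ∃ π' ∈ potSet H n, (seqDist π π' : ℝ) < ε * n

/-- The join `G ∨ H` of two graphs on disjoint vertex sets. -/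
def graphJoin {V : Type*} {W : Type*} (G : SimpleGraph V) (H : SimpleGraph W) :
    SimpleGraph (V ⊕ W) where
  Adj x y :=
    match x, y with
    | .inl a, .inl b => G.Adj a b
    | .inr a, .inr b => H.Adj a b
    | .inl _, .inr _ => True
    | .inr _, .inl _ => True
  symm := by
    constructor
    rintro (a | a) (b | b) h
    · exact G.adj_symm h
    · trivial
    · trivial
    · exact H.adj_symm h
  loopless := by
    constructor
    rintro (a | a) h
    · exact G.loopless.irrefl a h
    · exact H.loopless.irrefl a h

/-- The double star `S_{x,y}`: two adjacent centers (vertices `0` and `1`), with the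
first center adjacent to `x` leaves and the second to `y` leaves, so that the centers
have degrees `x+1` and `y+1`. -/
def doubleStar (x y : ℕ) : SimpleGraph (Fin (x + y + 2)) :=
  SimpleGraph.fromRel fun a b =>
    (a.val = 0 ∧ b.val = 1) ∨
    (a.val = 0 ∧ 2 ≤ b.val ∧ b.val < x + 2) ∨
    (a.val = 1 ∧ x + 2 ≤ b.val)

/-- Laying off the term at (0-based) position `i`: delete it and subtract one from
the `d_i` largest remaining terms. -/
def layOffAt (π : List ℕ) (i : ℕ) : List ℕ :=
  let d := π.getD i 0
  let rest := π.take i ++ π.drop (i + 1)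
  (rest.take d).map (· - 1) ++ rest.drop d

/-!
Write `k = K + 3`. Stability, applied to non-potentially-`K_k`-graphic sequences whose sum is
within `2` of `σ(K_k, n)`, puts such sequences `o(n)`-close to `P(K_k, n)`; since `α(K_k) = 1`,
every member of `P(K_k, n)` has at most `k - 2` terms above `k - 2`, so
`σ(K_k, n) ≤ 2(k - 2)n + o(n)`.

The degree sequence of `K_K ∨ S_{M+1,M+1}` on `n = 2M + K + 4` vertices has only `k - 1` terms
`≥ k - 1`, so it is not potentially `K_k`-graphic, and its sum is `2(k - 2)n - O(1)`, hence it is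
admissible for stability. Its `(k - 1)`-st term, however, is `K + M + 2 ≈ n / 2`, while that term
is at most `k - 2` for every member of `P(K_k, n)`: the sequence stays at distance `≈ n / 2` from
`P(K_k, n)`.
-/

open Finset

section Degrees

variable {V W : Type*} [Fintype V] [Fintype W]

lemma gdeg_top (v : V) : gdeg (⊤ : SimpleGraph V) v = Fintype.card V - 1 := by
  have : {w | (⊤ : SimpleGraph V).Adj v w} = {v}ᶜ := by ext; simp [eq_comm]
  rw [gdeg, this, Set.ncard_compl, Set.ncard_singleton, Nat.card_eq_fintype_card]

lemma gdeg_le_gdeg_top (G : SimpleGraph V) (v : V) : gdeg G v ≤ gdeg ⊤ v :=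
  Set.ncard_le_ncard (fun _ h => G.ne_of_adj h)

lemma maxDeg_le (G : SimpleGraph V) : maxDeg G ≤ Fintype.card V - 1 :=
  Finset.sup_le fun v _ => (gdeg_le_gdeg_top G v).trans (gdeg_top v).le

lemma gdeg_le_gdeg_of_injective_hom {H : SimpleGraph V} {G : SimpleGraph W} {f : V → W}
    (hf : Function.Injective f) (hadj : ∀ ⦃a b⦄, H.Adj a b → G.Adj (f a) (f b)) (v : V) :
    gdeg H v ≤ gdeg G (f v) := by
  rw [gdeg, ← Set.ncard_image_of_injective _ hf]
  exact Set.ncard_le_ncard (by rintro _ ⟨w, hw, rfl⟩; exact hadj hw)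

lemma countP_degMultiset (G : SimpleGraph V) (p : ℕ → Prop) [DecidablePred p] :
    (degMultiset G).countP p = #{v | p (gdeg G v)} := by
  rw [degMultiset, Multiset.countP_map]
  rfl

end Degrees

lemma PotentiallyGraphic.card_filter_le_countP {V : Type*} [Fintype V] {H : SimpleGraph V}
    {π : List ℕ} (h : PotentiallyGraphic H π) (d : ℕ) :
    #{v | d ≤ gdeg H v} ≤ π.countP (d ≤ ·) := by
  classical
  obtain ⟨G, hdeg, f, hf, hadj⟩ := h
  have hcount : π.countP (d ≤ ·) = #{w | d ≤ gdeg G w} := by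
    rw [← countP_degMultiset, hdeg, Multiset.coe_countP]
  rw [hcount, ← Finset.card_image_of_injective _ hf]
  refine Finset.card_le_card fun w hw => ?_
  obtain ⟨v, hv, rfl⟩ := Finset.mem_image.1 hw
  simp only [Finset.mem_filter, Finset.mem_univ, true_and] at hv ⊢
  exact hv.trans (gdeg_le_gdeg_of_injective_hom hf hadj v)

lemma isGraphic_replicate_zero (n : ℕ) : IsGraphic (List.replicate n 0) :=
  ⟨⊥, by simp [degMultiset, gdeg]⟩

lemma not_potentiallyGraphic_replicate_zero {V : Type*} [Fintype V] {H : SimpleGraph V}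
    {a b : V} (hab : H.Adj a b) (n : ℕ) : ¬ PotentiallyGraphic H (List.replicate n 0) := by
  classical
  intro h
  have hpos : 0 < #{v | 1 ≤ gdeg H v} :=
    Finset.card_pos.2 ⟨a, Finset.mem_filter.2 ⟨mem_univ a, (Set.ncard_pos).2 ⟨b, hab⟩⟩⟩
  have := h.card_filter_le_countP 1
  rw [List.countP_replicate, if_neg (by decide)] at this
  omega

lemma exists_not_potentiallyGraphic_potentialNumber_le {V : Type*} [Fintype V]
    {H : SimpleGraph V} {a b : V} (hab : H.Adj a b) (n : ℕ) :
    ∃ π : List ℕ, π.length = n ∧ π.Sorted (· ≥ ·) ∧ IsGraphic π ∧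
      ¬ PotentiallyGraphic H π ∧ potentialNumber H n ≤ π.sum + 2 := by
  -- the case `σ(H,n) = 0` includes the junk value `sInf ∅`
  by_cases h0 : potentialNumber H n = 0
  · exact ⟨List.replicate n 0, by simp, List.pairwise_replicate.2 (Or.inr le_rfl),
      isGraphic_replicate_zero n, not_potentiallyGraphic_replicate_zero hab n, by omega⟩
  obtain ⟨t, ht⟩ : Even (potentialNumber H n) :=
    (Nat.sInf_mem (Set.nonempty_iff_ne_empty.2 fun h => h0 (Nat.sInf_eq_zero.2 (Or.inr h)))).1
  have hnot := Nat.notMem_of_lt_sInf (show potentialNumber H n - 2 < potentialNumber H n by omega)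
  simp only [Set.mem_ofPred_eq, not_and, not_forall] at hnot
  obtain ⟨π, hlen, hsort, hgr, hsum, hnp⟩ := hnot ⟨t - 1, by omega⟩
  exact ⟨π, hlen, hsort, hgr, hnp, by omega⟩

section SeqDist

lemma List.sum_eq_sum_range_getD (l : List ℕ) {m : ℕ} (hm : l.length ≤ m) :
    l.sum = ∑ j ∈ Finset.range m, l.getD j 0 := by
  rw [← Finset.sum_subset (Finset.range_subset_range.2 hm)
    fun j _ hj => List.getD_eq_default _ _ (by simpa using hj), Finset.sum_range]
  simp

lemma seqDist_eq_sum (p q : List ℕ) :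
    seqDist p q =
      ∑ j ∈ Finset.range (max p.length q.length), Nat.dist (p.getD j 0) (q.getD j 0) :=
  rfl

lemma sum_le_sum_add_seqDist (p q : List ℕ) : p.sum ≤ q.sum + seqDist p q := by
  rw [seqDist_eq_sum, p.sum_eq_sum_range_getD (le_max_left _ q.length),
    q.sum_eq_sum_range_getD (le_max_right p.length _), ← Finset.sum_add_distrib]
  exact Finset.sum_le_sum fun j _ => by simp only [Nat.dist]; omega

lemma dist_getD_le_seqDist (p q : List ℕ) {j : ℕ} (hj : j < p.length) :
    Nat.dist (p.getD j 0) (q.getD j 0) ≤ seqDist p q := by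
  rw [seqDist_eq_sum]
  exact Finset.single_le_sum (f := fun j => Nat.dist (p.getD j 0) (q.getD j 0))
    (fun _ _ => Nat.zero_le _) (Finset.mem_range.2 (hj.trans_le (le_max_left _ _)))

end SeqDist

lemma SigmaStable.exists_potentialNumber_le {V : Type*} [Fintype V] {H : SimpleGraph V}
    (hH : SigmaStable H) {a b : V} (hab : H.Adj a b) {ε : ℝ} (hε : 0 < ε) :
    ∃ n₀ : ℕ, ∀ n ≥ n₀, ∃ π' ∈ potSet H n,
      (potentialNumber H n : ℝ) ≤ π'.sum + 2 + ε * n := by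
  obtain ⟨δ, hδ, n₀, hstab⟩ := hH ε hε
  refine ⟨max n₀ ⌈2 / δ⌉₊, fun n hn => ?_⟩
  obtain ⟨π, hlen, hsort, hgr, hnp, hσ⟩ :=
    exists_not_potentiallyGraphic_potentialNumber_le hab n
  have hσ' : (potentialNumber H n : ℝ) ≤ π.sum + 2 := by exact_mod_cast hσ
  have hδn : 2 ≤ δ * n := by
    have := (Nat.le_ceil (2 / δ)).trans (Nat.cast_le.2 (le_of_max_le_right hn))
    rwa [div_le_iff₀ hδ, mul_comm] at this
  obtain ⟨π', hπ', hdist⟩ :=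
    hstab n (le_of_max_le_left hn) π hlen hsort hgr hnp (by linarith)
  have hsum : (π.sum : ℝ) ≤ π'.sum + seqDist π π' := by
    exact_mod_cast sum_le_sum_add_seqDist π π'
  exact ⟨π', hπ', by linarith⟩

section ExtremalSequences

variable {V : Type*} [Fintype V]

lemma nabla_le (H : SimpleGraph V) {i : ℕ} (hi : i ≤ Fintype.card V) : nabla H i ≤ i - 1 := by
  classical
  obtain ⟨s, -, hs⟩ := Finset.exists_subset_card_eq (s := (univ : Finset V)) (by simpa using hi)
  unfold nabla
  refine (Nat.sInf_le ?_).trans ((maxDeg_le (H.induce (s : Set V))).trans ?_)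
  · exact ⟨s, hs, rfl⟩
  · simp [hs]

lemma one_le_indepNum [Nonempty V] (G : SimpleGraph V) : 1 ≤ _root_.indepNum G :=
  le_csSup (s := {k | ∃ s : Finset V, #s = k ∧ (s : Set V).Pairwise fun a b => ¬ G.Adj a b})
    ⟨Fintype.card V, by rintro _ ⟨s, rfl, -⟩; exact s.card_le_univ⟩
    ⟨{Classical.arbitrary V}, Finset.card_singleton _, by simp⟩

lemma tildePi_getD_le (H : SimpleGraph V) {i j : ℕ} (n : ℕ) (hj : Fintype.card V - i ≤ j) :
    (tildePi H i n).getD j 0 ≤ Fintype.card V - i + nabla H i - 1 := by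
  dsimp only [tildePi]
  set d := Fintype.card V - i + nabla H i - 1
  set base := List.replicate (Fintype.card V - i) (n - 1) ++
    List.replicate (n - Fintype.card V + i) d
  have hbase : ∀ m, Fintype.card V - i ≤ m → base.getD m 0 ≤ d := fun m hm => by
    rw [List.getD_append_right _ _ _ _ (by simpa using hm), List.getD_eq_getElem?_getD,
      List.getElem?_replicate]
    split_ifs <;> simp
  split_ifs
  · exact hbase j hj
  rcases lt_or_ge j base.dropLast.length with h | h
  · rw [List.getD_append _ _ _ _ h, List.getD_eq_getElem _ _ h, List.getElem_dropLast,
      ← List.getD_eq_getElem _ 0]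
    exact hbase j hj
  · rw [List.getD_append_right _ _ _ _ h]
    cases j - base.dropLast.length <;> simp

lemma tildePi_sum_le (H : SimpleGraph V) (i n : ℕ) :
    (tildePi H i n).sum ≤ (Fintype.card V - i) * (n - 1) +
      (n - Fintype.card V + i) * (Fintype.card V - i + nabla H i - 1) +
      (Fintype.card V - i + nabla H i - 1) := by
  dsimp only [tildePi]
  split_ifs
  · simp
  · rw [List.sum_append, List.sum_singleton]
    have := (List.dropLast_sublist (List.replicate (Fintype.card V - i) (n - 1) ++
      List.replicate (n - Fintype.card V + i) (Fintype.card V - i + nabla H i - 1))).sum_le_sum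
      (fun _ _ => Nat.zero_le _)
    simp only [List.sum_append, List.sum_replicate, smul_eq_mul] at this
    omega

lemma exists_index_of_mem_potSet [Nonempty V] {H : SimpleGraph V} {n : ℕ} {π' : List ℕ}
    (h : π' ∈ potSet H n) : ∃ i, 2 ≤ i ∧ i ≤ Fintype.card V ∧ π' = tildePi H i n := by
  obtain ⟨i, hi, -, rfl⟩ := h
  have := one_le_indepNum H
  rw [Finset.mem_Icc] at hi
  exact ⟨i, by omega, hi.2, rfl⟩

lemma getD_le_of_mem_potSet [Nonempty V] {H : SimpleGraph V} {n : ℕ} {π' : List ℕ}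
    (h : π' ∈ potSet H n) : π'.getD (Fintype.card V - 2) 0 ≤ Fintype.card V - 2 := by
  obtain ⟨i, hi, hik, rfl⟩ := exists_index_of_mem_potSet h
  have := nabla_le H hik
  exact (tildePi_getD_le H n (by omega)).trans (by omega)

lemma sum_le_of_mem_potSet [Nonempty V] {H : SimpleGraph V} {n : ℕ} {π' : List ℕ}
    (h : π' ∈ potSet H n) (hn : Fintype.card V ≤ n) :
    π'.sum ≤ 2 * (Fintype.card V - 2) * n := by
  obtain ⟨i, hi, hik, rfl⟩ := exists_index_of_mem_potSet h
  have hnabla := nabla_le H hik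
  set c := Fintype.card V - 2
  have h₁ : (Fintype.card V - i) * (n - 1) ≤ c * (n - 1) := Nat.mul_le_mul_right _ (by omega)
  have h₂ : (n - Fintype.card V + i) * (Fintype.card V - i + nabla H i - 1) ≤ n * c :=
    Nat.mul_le_mul (by omega) (by omega)
  have h₃ : c * (n - 1) + c = c * n := by
    rw [← Nat.mul_succ]; congr 1; have := Fintype.card_pos (α := V); omega
  have h₄ : 2 * c * n = c * n + n * c := by ring
  have := tildePi_sum_le H i n
  omega

end ExtremalSequences

section Realizations

variable {V W : Type*} [Fintype V] [Fintype W]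

lemma degMultiset_comap_equiv (G : SimpleGraph V) (e : W ≃ V) :
    degMultiset (G.comap e) = degMultiset G := by
  have hdeg : ∀ w, gdeg (G.comap e) w = gdeg G (e w) := fun w =>
    Set.ncard_preimage_of_injective_subset_range (s := {v | G.Adj (e w) v}) e.injective
      (by simp)
  simp only [degMultiset, hdeg]
  rw [← Function.comp_def, ← Multiset.map_map, Multiset.map_univ_val_equiv]

lemma isGraphic_of_degMultiset (G : SimpleGraph V) {π : List ℕ} (h : degMultiset G = π) :
    IsGraphic π := by
  have hcard : Fintype.card V = π.length := by
    simpa [degMultiset] using congrArg Multiset.card h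
  exact ⟨G.comap (Fintype.equivFinOfCardEq hcard).symm, by rw [degMultiset_comap_equiv, h]⟩

lemma degMultiset_top : degMultiset (⊤ : SimpleGraph V) =
    Multiset.replicate (Fintype.card V) (Fintype.card V - 1) := by
  simp only [degMultiset, gdeg_top, Multiset.map_const', Finset.card_val, Finset.card_univ]

variable (G : SimpleGraph V) (H : SimpleGraph W)

lemma gdeg_graphJoin_inl (a : V) :
    gdeg (graphJoin G H) (.inl a) = gdeg G a + Fintype.card W := by
  have : {w | (graphJoin G H).Adj (.inl a) w} = .inl '' {b | G.Adj a b} ∪ Set.range .inr := by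
    ext (b | b) <;> simp [graphJoin]
  rw [gdeg, this, Set.ncard_union_eq (by simp [Set.disjoint_left]),
    Set.ncard_image_of_injective _ Sum.inl_injective,
    Set.ncard_range_of_injective Sum.inr_injective, Nat.card_eq_fintype_card, gdeg]

lemma gdeg_graphJoin_inr (b : W) :
    gdeg (graphJoin G H) (.inr b) = Fintype.card V + gdeg H b := by
  have : {w | (graphJoin G H).Adj (.inr b) w} = Set.range .inl ∪ .inr '' {c | H.Adj b c} := by
    ext (c | c) <;> simp [graphJoin]
  rw [gdeg, this, Set.ncard_union_eq (by simp [Set.disjoint_left]),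
    Set.ncard_image_of_injective _ Sum.inr_injective,
    Set.ncard_range_of_injective Sum.inl_injective, Nat.card_eq_fintype_card, gdeg]

lemma degMultiset_graphJoin : degMultiset (graphJoin G H) =
    (degMultiset G).map (· + Fintype.card W) + (degMultiset H).map (Fintype.card V + ·) := by
  change (univ.val.map Sum.inl + univ.val.map Sum.inr).map _ = _
  simp only [Multiset.map_add, Multiset.map_map, Function.comp_def, gdeg_graphJoin_inl,
    gdeg_graphJoin_inr, degMultiset]

end Realizations

section DoubleStar

lemma ncard_setOf_fin_val (N : ℕ) (P : ℕ → Prop) [DecidablePred P] :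
    {w : Fin N | P w}.ncard = #{j ∈ Finset.range N | P j} := by
  rw [Set.ncard_eq_toFinset_card', Set.toFinset_ofPred, Finset.card_filter, Finset.card_filter,
    Fin.sum_univ_eq_sum_range (fun j => if P j then 1 else 0)]

variable (x y : ℕ)

lemma doubleStar_adj {v w : Fin (x + y + 2)} : (doubleStar x y).Adj v w ↔
    v.val = 0 ∧ 1 ≤ w.val ∧ w.val < x + 2 ∨ w.val = 0 ∧ 1 ≤ v.val ∧ v.val < x + 2 ∨
    v.val = 1 ∧ (w.val = 0 ∨ x + 2 ≤ w.val) ∨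
    w.val = 1 ∧ (v.val = 0 ∨ x + 2 ≤ v.val) := by
  simp only [doubleStar, SimpleGraph.fromRel_adj, ne_eq, Fin.ext_iff]
  omega

lemma gdeg_doubleStar_zero : gdeg (doubleStar x y) 0 = x + 1 := by
  have : {w | (doubleStar x y).Adj 0 w} =
      {w : Fin (x + y + 2) | 1 ≤ w.val ∧ w.val < x + 2} := by
    ext w; simp only [Set.mem_ofPred_eq, doubleStar_adj, Fin.val_zero, true_and, true_or]; omega
  rw [gdeg, this, ncard_setOf_fin_val _ (fun j => 1 ≤ j ∧ j < x + 2)]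
  have : {j ∈ Finset.range (x + y + 2) | 1 ≤ j ∧ j < x + 2} = Finset.Ico 1 (x + 2) := by
    ext j; simp only [mem_filter, mem_range, mem_Ico]; omega
  simp [this]

lemma gdeg_doubleStar_one : gdeg (doubleStar x y) 1 = y + 1 := by
  have : {w | (doubleStar x y).Adj 1 w} =
      {w : Fin (x + y + 2) | w.val = 0 ∨ x + 2 ≤ w.val} := by
    ext w; simp only [Set.mem_ofPred_eq, doubleStar_adj, Fin.val_one, true_and]; omega
  rw [gdeg, this, ncard_setOf_fin_val _ (fun j => j = 0 ∨ x + 2 ≤ j)]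
  have : {j ∈ Finset.range (x + y + 2) | j = 0 ∨ x + 2 ≤ j} =
      insert 0 (Finset.Ico (x + 2) (x + y + 2)) := by
    ext j; simp only [mem_filter, mem_range, mem_insert, mem_Ico]; omega
  rw [this, Finset.card_insert_of_notMem (by simp)]
  simp

lemma gdeg_doubleStar_leaf (v : Fin (x + y + 2)) (hv : 2 ≤ v.val) :
    gdeg (doubleStar x y) v = 1 := by
  have : {w | (doubleStar x y).Adj v w} =
      {w : Fin (x + y + 2) | w.val = if v.val < x + 2 then 0 else 1} := by
    ext w; simp only [Set.mem_ofPred_eq, doubleStar_adj]; split_ifs <;> omega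
  rw [gdeg, this, ncard_setOf_fin_val _ (fun j => j = if v.val < x + 2 then 0 else 1)]
  split_ifs <;> simp [Finset.filter_eq']

lemma degMultiset_doubleStar :
    degMultiset (doubleStar x y) = (x + 1) ::ₘ (y + 1) ::ₘ Multiset.replicate (x + y) 1 := by
  have hleaves : (fun i : Fin (x + y) => gdeg (doubleStar x y) i.succ.succ) = fun _ => 1 :=
    funext fun i => gdeg_doubleStar_leaf x y _ (by simp)
  rw [degMultiset, Fin.univ_val_map, List.ofFn_succ, List.ofFn_succ, hleaves, List.ofFn_const]
  simp [gdeg_doubleStar_zero, gdeg_doubleStar_one, ← Multiset.cons_coe, Multiset.coe_replicate]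

end DoubleStar

section Counterexample

def cliqueJoinDoubleStarSeq (K M : ℕ) : List ℕ :=
  List.replicate K (2 * M + K + 3) ++
    (K + M + 2) :: (K + M + 2) :: List.replicate (2 * M + 2) (K + 1)

variable (K M : ℕ)

lemma length_cliqueJoinDoubleStarSeq : (cliqueJoinDoubleStarSeq K M).length = 2 * M + K + 4 := by
  simp only [cliqueJoinDoubleStarSeq, List.length_append, List.length_replicate, List.length_cons]
  omega

lemma sum_cliqueJoinDoubleStarSeq :
    (cliqueJoinDoubleStarSeq K M).sum + (K + 1) * (K + 2) = 2 * (K + 1) * (2 * M + K + 4) := by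
  simp only [cliqueJoinDoubleStarSeq, List.sum_append, List.sum_cons, List.sum_replicate,
    smul_eq_mul]
  ring

lemma sorted_cliqueJoinDoubleStarSeq : (cliqueJoinDoubleStarSeq K M).Sorted (· ≥ ·) := by
  simp only [List.Sorted, cliqueJoinDoubleStarSeq, List.pairwise_append, List.pairwise_cons,
    List.pairwise_replicate, List.mem_cons, List.mem_replicate]
  grind

lemma degMultiset_cliqueJoinDoubleStar :
    degMultiset (graphJoin (⊤ : SimpleGraph (Fin K)) (doubleStar (M + 1) (M + 1))) =
      cliqueJoinDoubleStarSeq K M := by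
  rw [degMultiset_graphJoin, degMultiset_top, degMultiset_doubleStar, cliqueJoinDoubleStarSeq,
    ← Multiset.coe_add, ← Multiset.cons_coe, ← Multiset.cons_coe, Multiset.coe_replicate,
    Multiset.coe_replicate]
  simp only [Multiset.map_replicate, Multiset.map_cons, Fintype.card_fin]
  have hclique : Multiset.replicate K (K - 1 + (M + 1 + (M + 1) + 2)) =
      Multiset.replicate K (2 * M + K + 3) := by
    rcases K with _ | K
    · rfl
    · congr 1; omega
  rw [hclique, show M + 1 + (M + 1) = 2 * M + 2 by ring, show K + (M + 1 + 1) = K + M + 2 by ring]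

lemma isGraphic_cliqueJoinDoubleStarSeq : IsGraphic (cliqueJoinDoubleStarSeq K M) :=
  isGraphic_of_degMultiset _ (degMultiset_cliqueJoinDoubleStar K M)

lemma not_potentiallyGraphic_cliqueJoinDoubleStarSeq :
    ¬ PotentiallyGraphic (⊤ : SimpleGraph (Fin (K + 3))) (cliqueJoinDoubleStarSeq K M) := by
  intro h
  have hall : #{v : Fin (K + 3) | K + 2 ≤ gdeg ⊤ v} = K + 3 := by simp [gdeg_top]
  have hcount : (cliqueJoinDoubleStarSeq K M).countP (K + 2 ≤ ·) = K + 2 := by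
    simp only [cliqueJoinDoubleStarSeq, List.countP_append, List.countP_replicate,
      List.countP_cons, decide_eq_true_eq]
    split_ifs <;> omega
  have := h.card_filter_le_countP (K + 2)
  omega

lemma le_seqDist_cliqueJoinDoubleStarSeq {π' : List ℕ}
    (h : π' ∈ potSet (⊤ : SimpleGraph (Fin (K + 3))) (2 * M + K + 4)) :
    M + 1 ≤ seqDist (cliqueJoinDoubleStarSeq K M) π' := by
  have hlt : K + 1 < (cliqueJoinDoubleStarSeq K M).length := by
    rw [length_cliqueJoinDoubleStarSeq]; omega
  have hfar := dist_getD_le_seqDist _ π' hlt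
  have hsmall : π'.getD (K + 1) 0 ≤ K + 1 := by simpa using getD_le_of_mem_potSet h
  have hbig : (cliqueJoinDoubleStarSeq K M).getD (K + 1) 0 = K + M + 2 := by
    simp [cliqueJoinDoubleStarSeq]
  rw [hbig, Nat.dist] at hfar
  omega

end Counterexample

/-- **Theorem.** For every `k ≥ 3`, the complete graph `K_k` is not σ-stable. -/
theorem cliqueNotStable (k : ℕ) (hk : 3 ≤ k) :
    ¬ SigmaStable (⊤ : SimpleGraph (Fin k)) := by
  obtain ⟨K, rfl⟩ : ∃ K, k = K + 3 := ⟨k - 3, by omega⟩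
  intro hstab
  obtain ⟨δ, hδ, n₀, hclose⟩ := hstab (1 / 4) (by norm_num)
  obtain ⟨n₁, hσ⟩ :=
    hstab.exists_potentialNumber_le (a := 0) (b := 1) (by simp) (half_pos hδ)
  obtain ⟨M, hn₀M, hn₁M, hKM, hδM⟩ := ((Filter.eventually_ge_atTop n₀).and <|
    (Filter.eventually_ge_atTop n₁).and <| (Filter.eventually_ge_atTop K).and <|
    (tendsto_natCast_atTop_atTop.const_mul_atTop hδ).eventually_gt_atTop
      (2 * (2 + ((K : ℝ) + 1) * (K + 2)))).exists
  set n := 2 * M + K + 4 with hn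
  have hδn : δ * M ≤ δ * n := mul_le_mul_of_nonneg_left (by exact_mod_cast (by omega)) hδ.le
  obtain ⟨π₁, hπ₁, hσπ₁⟩ := hσ n (by omega)
  have hπ₁sum : (π₁.sum : ℝ) ≤ 2 * (K + 1) * n := by
    exact_mod_cast (by simpa using sum_le_of_mem_potSet hπ₁ (by rw [Fintype.card_fin]; omega))
  have hseq : ((cliqueJoinDoubleStarSeq K M).sum : ℝ) + (K + 1) * (K + 2) = 2 * (K + 1) * n := by
    exact_mod_cast sum_cliqueJoinDoubleStarSeq K M
  obtain ⟨π₂, hπ₂, hdist⟩ := hclose n (by omega) _ (length_cliqueJoinDoubleStarSeq K M)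
    (sorted_cliqueJoinDoubleStarSeq K M) (isGraphic_cliqueJoinDoubleStarSeq K M)
    (not_potentiallyGraphic_cliqueJoinDoubleStarSeq K M) (by linarith)
  have hfar : (M + 1 : ℝ) ≤ seqDist (cliqueJoinDoubleStarSeq K M) π₂ := by
    exact_mod_cast le_seqDist_cliqueJoinDoubleStarSeq K M hπ₂
  have hMK : (K : ℝ) ≤ M := by exact_mod_cast hKM
  have : (n : ℝ) = 2 * M + K + 4 := by simp [hn]
  linarith
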